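/- arXiv:1609.05649 — 3 statements merged into one kernel-verified Lean document; each statement's English description precedes it below -/
import Mathlib

section
/- Let q be a prime power and n a positive integer. Let C and C' be linear codes (subspaces) of F_q^n, let a = (a_1,...,a_n) be a vector with every a_i a nonzero element of F_q, and let e = (a_1^2,...,a_n^2). If C^⊥ = e·C' and C ∩ C' = {0}, then a·C is a linear complementary dual (LCD) code, i.e., (a·C) ∩ (a·C)^⊥ = {0}. -/
open scoped BigOperators

/-- The Euclidean dual of a linear code `C ⊆ F^n`. -/
def dualCode {F : Type*} [Field F] {n : ℕ} (C : Submodule F (Fin n → F)) :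
    Submodule F (Fin n → F) where
  carrier := {v | ∀ c ∈ C, ∑ i, v i * c i = 0}
  add_mem' := by
    intro u v hu hv c hc
    simp only [Pi.add_apply, add_mul, Finset.sum_add_distrib, hu c hc, hv c hc, add_zero]
  zero_mem' := by intro c hc; simp
  smul_mem' := by
    intro t v hv c hc
    simp only [Pi.smul_apply, smul_eq_mul, mul_assoc, ← Finset.mul_sum, hv c hc, mul_zero]

/-- Coordinatewise multiplication by the vector `a`, as a linear map. -/
def mulVec {F : Type*} [Field F] {n : ℕ} (a : Fin n → F) :
    (Fin n → F) →ₗ[F] (Fin n → F) where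
  toFun v := fun i => a i * v i
  map_add' := by intro u v; funext i; simp [mul_add]
  map_smul' := by intro t v; funext i; simp [smul_eq_mul]; ring

/-!
Coordinatewise scaling is self-adjoint for the Euclidean inner product, so
`(a·C)^⊥ = a⁻¹·C^⊥ = a⁻¹·(a²·C') = a·C'`. As scaling by `a` is injective,
`a·C ∩ a·C' = a·(C ∩ C') = 0`.
-/

section MulVec

variable {F : Type*} [Field F] {n : ℕ}

theorem mulVec_mul (a b : Fin n → F) : mulVec (a * b) = (mulVec a).comp (mulVec b) := by
  ext
  simp [mulVec, mul_assoc]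

theorem mulVec_injective {a : Fin n → F} (ha : ∀ i, a i ≠ 0) : Function.Injective (mulVec a) :=
  fun u v huv => funext fun i => mul_left_cancel₀ (ha i) (congrFun huv i)

theorem dualCode_map_mulVec (C : Submodule F (Fin n → F)) (a : Fin n → F) :
    dualCode (C.map (mulVec a)) = (dualCode C).comap (mulVec a) := by
  ext v
  simp only [dualCode, Submodule.mem_comap, Submodule.mem_mk, AddSubmonoid.mem_mk,
    AddSubsemigroup.mem_mk, Set.mem_ofPred_eq, Submodule.mem_map, forall_exists_index, and_imp,
    forall_apply_eq_imp_iff₂, mulVec, LinearMap.coe_mk, AddHom.coe_mk, mul_left_comm (v _),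
    mul_assoc]

end MulVec

theorem stmt1_general {F : Type*} [Field F] {n : ℕ}
    (C C' : Submodule F (Fin n → F)) (a : Fin n → F) (ha : ∀ i, a i ≠ 0)
    (h : dualCode C = C'.map (mulVec (fun i => (a i) ^ 2)))
    (h' : C ⊓ C' = ⊥) :
    (C.map (mulVec a)) ⊓ dualCode (C.map (mulVec a)) = ⊥ := by
  have hinj := mulVec_injective ha
  have hsq : (fun i => a i ^ 2) = a * a := funext fun i => sq (a i)
  have hdual : dualCode (C.map (mulVec a)) = C'.map (mulVec a) := by
    rw [dualCode_map_mulVec, h, hsq, mulVec_mul, Submodule.map_comp,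
      Submodule.comap_map_eq_of_injective hinj]
  rw [hdual, ← Submodule.map_inf _ hinj, h', Submodule.map_bot]

/-- if `C^⊥ = e·C'` with `e = (a_1^2, …, a_n^2)` and `C ∩ C' = {0}`,
then `a·C` is a linear complementary dual (LCD) code. -/
theorem stmt1 {F : Type*} [Field F] [Fintype F] {n : ℕ} (hn : 0 < n)
    (C C' : Submodule F (Fin n → F)) (a : Fin n → F) (ha : ∀ i, a i ≠ 0)
    (h : dualCode C = C'.map (mulVec (fun i => (a i) ^ 2)))
    (h' : C ⊓ C' = ⊥) :
    (C.map (mulVec a)) ⊓ dualCode (C.map (mulVec a)) = ⊥ :=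
  stmt1_general C C' a ha h h'
end

section
/- Let q be a prime power, ρ a generator of the cyclic group F_q^×, and r an integer with 0 < r and 2r ≤ q - 2. For each integer i, let v_i ∈ F_q^{q-1} be the vector whose j-th coordinate is ρ^{i·j} for j = 0, 1, ..., q-2. Then the Euclidean dual of the code C = span{v_i : -r ≤ i ≤ r} is C^⊥ = span{v_i : r+1 ≤ i ≤ q-2-r}. -/
open scoped BigOperators

/-- The vector `v_i ∈ F^{q-1}` whose `j`-th coordinate is `ρ^{i·j}`, `j = 0, …, q-2`. -/
def expVec {F : Type*} [Field F] [Fintype F] (ρ : Fˣ) (i : ℤ) :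
    Fin (Fintype.card F - 1) → F :=
  fun j => ((ρ ^ (i * ((j : ℕ) : ℤ)) : Fˣ) : F)

/-!
As ρ has order `n = q - 1`, `⟨v_i, v_k⟩ = ∑_j ρ^{(i+k) j}` is `n` if `n ∣ i + k` and `0` otherwise,
and `n = -1 ≠ 0` in `F`. Discrete Fourier inversion, `n • w = ∑_{k < n} ⟨w, v_{-k}⟩ v_k`, then shows
that `w` is orthogonal to all `v_m` with `m ∈ S` exactly when it is a combination of the `v_k`,
`0 ≤ k < n`, with `k + m ≢ 0 (mod n)` for every `m ∈ S`. For `S = [-r, r]` these are the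
`k ∈ [r + 1, n - 1 - r]`.
-/

open Finset

theorem IsPrimitiveRoot.geom_sum_zpow {K : Type*} [Field K] {ζ : Kˣ} {n : ℕ}
    (hζ : IsPrimitiveRoot ζ n) (m : ℤ) :
    ∑ j ∈ range n, ((ζ ^ m : Kˣ) : K) ^ j = if (n : ℤ) ∣ m then (n : K) else 0 := by
  split_ifs with hdvd
  · simp [(hζ.zpow_eq_one_iff_dvd m).2 hdvd]
  · have hne : ((ζ ^ m : Kˣ) : K) ≠ 1 :=
      fun h => hdvd ((hζ.zpow_eq_one_iff_dvd m).1 (Units.val_eq_one.1 h))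
    have hpow : ((ζ ^ m : Kˣ) : K) ^ n = 1 := by
      rw [← Units.val_pow_eq_pow_val, ← zpow_natCast, ← zpow_mul,
        (hζ.zpow_eq_one_iff_dvd _).2 (dvd_mul_left _ _), Units.val_one]
    rw [geom_sum_eq hne, hpow, sub_self, zero_div]

theorem Fin.natCast_dvd_sub_iff {n : ℕ} (j l : Fin n) :
    (n : ℤ) ∣ ((j : ℕ) : ℤ) - (l : ℕ) ↔ j = l := by
  refine ⟨fun h => Fin.ext ?_, fun h => by simp [h]⟩
  have hzero := Int.eq_zero_of_dvd_of_natAbs_lt_natAbs h (by omega)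
  omega

theorem mem_dualCode_span_iff {F : Type*} [Field F] {n : ℕ} {s : Set (Fin n → F)}
    {v : Fin n → F} : v ∈ dualCode (Submodule.span F s) ↔ ∀ c ∈ s, v ⬝ᵥ c = 0 :=
  ⟨fun h c hc => h c (Submodule.subset_span hc),
    fun h c hc => (Submodule.span_le (p := LinearMap.ker (dotProductBilin F F v))).2 h hc⟩

theorem FiniteField.natCast_card_sub_one_ne_zero {F : Type*} [Field F] [Fintype F] :
    ((Fintype.card F - 1 : ℕ) : F) ≠ 0 := by
  rw [Nat.cast_sub Fintype.card_pos, FiniteField.cast_card_eq_zero]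
  simp

section expVec

variable {F : Type*} [Field F] [Fintype F] {ρ : Fˣ}

theorem expVec_mul_expVec (i k : ℤ) (j : Fin (Fintype.card F - 1)) :
    expVec ρ i j * expVec ρ k j = expVec ρ (i + k) j := by
  simp only [expVec, ← Units.val_mul, ← zpow_add, add_mul]

theorem expVec_eq_of_dvd_sub {i i' : ℤ} (h : ((Fintype.card F - 1 : ℕ) : ℤ) ∣ i - i') :
    expVec ρ i = expVec ρ i' := by
  classical
  have hρ : ρ ^ (Fintype.card F - 1) = 1 := Fintype.card_units F ▸ pow_card_eq_one
  obtain ⟨c, hc⟩ := h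
  funext j
  simp only [expVec, eq_add_of_sub_eq hc, add_mul, zpow_add, mul_assoc, zpow_mul, zpow_natCast,
    hρ, one_zpow, one_pow, one_mul]

variable (hρ : IsPrimitiveRoot ρ (Fintype.card F - 1))
include hρ

theorem sum_expVec (i : ℤ) :
    ∑ j, expVec ρ i j =
      if ((Fintype.card F - 1 : ℕ) : ℤ) ∣ i then ((Fintype.card F - 1 : ℕ) : F) else 0 := by
  rw [← hρ.geom_sum_zpow i, ← Fin.sum_univ_eq_sum_range]
  simp only [expVec, zpow_mul, zpow_natCast, Units.val_pow_eq_pow_val]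

theorem expVec_dotProduct_expVec (i k : ℤ) :
    expVec ρ i ⬝ᵥ expVec ρ k =
      if ((Fintype.card F - 1 : ℕ) : ℤ) ∣ i + k then ((Fintype.card F - 1 : ℕ) : F) else 0 := by
  simp only [dotProduct, expVec_mul_expVec, sum_expVec hρ]

theorem sum_dotProduct_expVec_smul_expVec (w : Fin (Fintype.card F - 1) → F) :
    ∑ k : Fin (Fintype.card F - 1), (w ⬝ᵥ expVec ρ (-(k : ℕ))) • expVec ρ (k : ℕ) =
      ((Fintype.card F - 1 : ℕ) : F) • w := by
  funext j
  have hswap : ∀ k l : Fin (Fintype.card F - 1),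
      expVec ρ (-(k : ℕ)) l * expVec ρ (k : ℕ) j = expVec ρ ((j : ℕ) - (l : ℕ)) k := by
    intro k l
    simp only [expVec, ← Units.val_mul, ← zpow_add]
    ring_nf
  simp only [Finset.sum_apply, Pi.smul_apply, smul_eq_mul, dotProduct, Finset.sum_mul, mul_assoc,
    hswap]
  rw [Finset.sum_comm]
  simp [← Finset.mul_sum, sum_expVec hρ, Fin.natCast_dvd_sub_iff, mul_comm]

theorem dualCode_span_expVec (S : Set ℤ) :
    dualCode (Submodule.span F (expVec ρ '' S)) =
      Submodule.span F (expVec ρ '' {k | k ∈ Set.Ico 0 ((Fintype.card F - 1 : ℕ) : ℤ) ∧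
        ∀ m ∈ S, ¬ ((Fintype.card F - 1 : ℕ) : ℤ) ∣ k + m}) := by
  apply le_antisymm
  · intro w hw
    have hw' := mem_dualCode_span_iff.1 hw
    rw [← inv_smul_smul₀ (FiniteField.natCast_card_sub_one_ne_zero (F := F)) w,
      ← sum_dotProduct_expVec_smul_expVec hρ]
    refine Submodule.smul_mem _ _ (Submodule.sum_mem _ fun k _ => ?_)
    by_cases hk : ∀ m ∈ S, ¬ ((Fintype.card F - 1 : ℕ) : ℤ) ∣ k + m
    · exact Submodule.smul_mem _ _ (Submodule.subset_span ⟨k, ⟨⟨by omega, by omega⟩, hk⟩, rfl⟩)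
    · push Not at hk
      obtain ⟨m, hm, hdvd⟩ := hk
      have hperiod : expVec ρ (-(k : ℕ)) = expVec ρ m :=
        expVec_eq_of_dvd_sub (by rw [← neg_add']; exact hdvd.neg_right)
      rw [hperiod, hw' _ ⟨m, hm, rfl⟩, zero_smul]
      exact Submodule.zero_mem _
  · rw [Submodule.span_le]
    rintro _ ⟨k, ⟨-, hk⟩, rfl⟩
    refine mem_dualCode_span_iff.2 ?_
    rintro _ ⟨m, hm, rfl⟩
    rw [expVec_dotProduct_expVec hρ, if_neg (hk m hm)]

end expVec

theorem setOf_mem_Ico_forall_not_dvd_add_eq_Icc {n r : ℤ} (hr : 0 ≤ r) :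
    {k | k ∈ Set.Ico 0 n ∧ ∀ m ∈ Set.Icc (-r) r, ¬ n ∣ k + m} = Set.Icc (r + 1) (n - 1 - r) := by
  ext k
  simp only [Set.mem_ofPred_eq, Set.mem_Ico, Set.mem_Icc]
  constructor
  · rintro ⟨⟨hk0, hkn⟩, hk⟩
    by_contra! hout
    rcases le_or_gt k r with hkr | hkr
    · exact hk (-k) ⟨by omega, by omega⟩ (by simp)
    · exact hk (n - k) ⟨by omega, by omega⟩ (by simp)
  · rintro ⟨hk1, hk2⟩
    refine ⟨⟨by omega, by omega⟩, fun m hm hdvd => ?_⟩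
    have hzero := Int.eq_zero_of_dvd_of_natAbs_lt_natAbs hdvd (by omega)
    omega

theorem stmt10_general {F : Type*} [Field F] [Fintype F] (ρ : Fˣ)
    (hρ : ∀ x : Fˣ, x ∈ Subgroup.zpowers ρ)
    (r : ℤ) (hr : 0 < r) :
    dualCode (Submodule.span F (expVec ρ '' Set.Icc (-r) r)) =
      Submodule.span F (expVec ρ '' Set.Icc (r + 1) ((Fintype.card F : ℤ) - 2 - r)) := by
  classical
  have hprim : IsPrimitiveRoot ρ (Fintype.card F - 1) := by
    rw [← Fintype.card_units, ← Nat.card_eq_fintype_card,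
      ← orderOf_eq_card_of_forall_mem_zpowers hρ]
    exact IsPrimitiveRoot.orderOf ρ
  have hcard : ((Fintype.card F - 1 : ℕ) : ℤ) - 1 - r = (Fintype.card F : ℤ) - 2 - r := by
    have : 1 ≤ Fintype.card F := Fintype.card_pos
    omega
  rw [dualCode_span_expVec hprim, setOf_mem_Ico_forall_not_dvd_add_eq_Icc hr.le, hcard]

/-- the Euclidean dual of `C = span{v_i : -r ≤ i ≤ r}` is
`span{v_i : r+1 ≤ i ≤ q-2-r}`. -/
theorem stmt10 {F : Type*} [Field F] [Fintype F] (ρ : Fˣ)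
    (hρ : ∀ x : Fˣ, x ∈ Subgroup.zpowers ρ)
    (r : ℤ) (hr : 0 < r) (hr2 : 2 * r ≤ (Fintype.card F : ℤ) - 2) :
    dualCode (Submodule.span F (expVec ρ '' Set.Icc (-r) r)) =
      Submodule.span F (expVec ρ '' Set.Icc (r + 1) ((Fintype.card F : ℤ) - 2 - r)) :=
  stmt10_general ρ hρ r hr
end

section
/- Let F_4 = F_2[ρ] be the field with four elements, where ρ satisfies ρ^2 + ρ + 1 = 0. Let C ⊆ F_4^7 be the linear code spanned by the three rows g_1 = (1,1,1,1,1,1,1), g_2 = (0,ρ,ρ,ρ^2,ρ^2,1,1), g_3 = (0,ρ,1,1,ρ^2,ρ^2,ρ). Then C is a linear complementary dual (LCD) code of length 7, dimension 3, and minimum Hamming distance 4. -/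
/-!
Identify `F₄` with `F₂ × F₂` via `(a, b) ↦ a + bρ`. This is an additive bijection onto `F` which
turns the multiplication of `F₂[ρ]` (with `ρ² = ρ + 1`) into the multiplication of `F`, so the
generators, the codewords `∑ tₖ gₖ` and the inner products all come from explicit vectors over
`F₂ × F₂`. There, orthogonality to the generators, linear independence and the weight bound are
finite checks over the `4³` coefficient triples.
-/

open scoped BigOperators

open Function

theorem charP_two_of_card_eq_two_pow {F : Type*} [Field F] [Fintype F] {k : ℕ}
    (hF : Fintype.card F = 2 ^ k) (hk : k ≠ 0) : CharP F 2 := by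
  have h : (2 : F) ^ k = 0 := by exact_mod_cast hF ▸ FiniteField.cast_card_eq_zero F
  exact CharTwo.of_one_ne_zero_of_two_eq_zero one_ne_zero (pow_eq_zero_iff hk |>.mp h)

def codeGen {F : Type*} [Field F] (ρ : F) : Fin 3 → Fin 7 → F :=
  ![![1, 1, 1, 1, 1, 1, 1], ![0, ρ, ρ, ρ ^ 2, ρ ^ 2, 1, 1], ![0, ρ, 1, 1, ρ ^ 2, ρ ^ 2, ρ]]

theorem range_codeGen {F : Type*} [Field F] (ρ : F) :
    Set.range (codeGen ρ) = {![1, 1, 1, 1, 1, 1, 1], ![0, ρ, ρ, ρ ^ 2, ρ ^ 2, 1, 1],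
      ![0, ρ, 1, 1, ρ ^ 2, ρ ^ 2, ρ]} := by
  rw [codeGen, Matrix.range_cons, Matrix.range_cons, Matrix.range_cons, Matrix.range_empty,
    Set.union_empty, Set.singleton_union, Set.singleton_union]

/-- `(a, b)` stands for `a + bρ ∈ F₂[ρ]`. The field product is `F₄.mul`, not the componentwise
product of the pair. -/
abbrev F₄ := ZMod 2 × ZMod 2

namespace F₄

/-- `(a + bρ)(c + dρ)`, reduced with `ρ² = ρ + 1`. -/
def mul (x y : F₄) : F₄ :=
  (x.1 * y.1 + x.2 * y.2, x.1 * y.2 + x.2 * y.1 + x.2 * y.2)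

def gen : Fin 3 → Fin 7 → F₄ :=
  ![fun _ => (1, 0),
    ![(0, 0), (0, 1), (0, 1), (1, 1), (1, 1), (1, 0), (1, 0)],
    ![(0, 0), (0, 1), (1, 0), (1, 0), (1, 1), (1, 1), (0, 1)]]

def codeword (t : Fin 3 → F₄) : Fin 7 → F₄ :=
  fun i => ∑ k, mul (t k) (gen k i)

theorem codeword_eq_zero_of_forall_orthogonal : ∀ t : Fin 3 → F₄,
    (∀ k, ∑ i, mul (codeword t i) (gen k i) = 0) → codeword t = 0 := by
  decide

theorem eq_zero_of_codeword_eq_zero : ∀ t : Fin 3 → F₄, codeword t = 0 → t = 0 := by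
  decide

theorem four_le_hammingNorm_codeword : ∀ t : Fin 3 → F₄,
    codeword t ≠ 0 → 4 ≤ hammingNorm (codeword t) := by
  decide

theorem exists_hammingNorm_codeword_eq_four : ∃ t : Fin 3 → F₄, hammingNorm (codeword t) = 4 :=
  ⟨![0, (0, 1), (1, 0)], by decide⟩

section Embedding

variable {F : Type*} [Field F] [CharP F 2] (ρ : F)

def toField : F₄ →+ F :=
  AddMonoidHom.mk' (fun x => ZMod.castHom dvd_rfl F x.1 + ZMod.castHom dvd_rfl F x.2 * ρ)
    (by intro x y; simp only [Prod.fst_add, Prod.snd_add, map_add]; ring)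

variable {ρ}

theorem toField_mul (hρ : ρ ^ 2 + ρ + 1 = 0) (x y : F₄) :
    toField ρ (mul x y) = toField ρ x * toField ρ y := by
  simp only [toField, mul, AddMonoidHom.mk'_apply, map_add, map_mul]
  linear_combination (ZMod.castHom dvd_rfl F x.2 * ZMod.castHom dvd_rfl F y.2) *
    (hρ - ρ ^ 2 * CharTwo.two_eq_zero (R := F))

theorem toField_injective (hρ : ρ ^ 2 + ρ + 1 = 0) : Injective (toField ρ) := by
  refine (injective_iff_map_eq_zero _).mpr fun x hx => ?_
  obtain ⟨a, b⟩ := x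
  have h01 : ∀ u : ZMod 2, u = 0 ∨ u = 1 := by decide
  rcases h01 a with rfl | rfl <;> rcases h01 b with rfl | rfl <;>
    simp only [toField, AddMonoidHom.mk'_apply, map_zero, map_one, zero_mul, one_mul,
      add_zero, zero_add] at hx
  · rfl
  · simp [hx] at hρ
  · exact absurd hx one_ne_zero
  · exact absurd (by linear_combination hρ - ρ * hx) one_ne_zero

theorem toField_bijective [Fintype F] (hF : Fintype.card F = 4) (hρ : ρ ^ 2 + ρ + 1 = 0) :
    Bijective (toField ρ) :=
  (Fintype.bijective_iff_injective_and_card _).mpr ⟨toField_injective hρ, by simp [hF]⟩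

theorem toField_comp_gen (hρ : ρ ^ 2 + ρ + 1 = 0) (k : Fin 3) :
    toField ρ ∘ gen k = codeGen ρ k := by
  have hsq : 1 + ρ = ρ ^ 2 := by linear_combination hρ - ρ ^ 2 * CharTwo.two_eq_zero (R := F)
  funext i
  fin_cases k <;> fin_cases i <;> simp [toField, gen, codeGen, hsq]

theorem toField_comp_codeword (hρ : ρ ^ 2 + ρ + 1 = 0) (t : Fin 3 → F₄) :
    toField ρ ∘ codeword t = ∑ k, toField ρ (t k) • codeGen ρ k := by
  funext i
  simp [codeword, map_sum, toField_mul hρ, ← toField_comp_gen hρ]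

end Embedding

end F₄

section Code

variable {F : Type*} [Field F] [Fintype F] [CharP F 2] {ρ : F}
  (hF : Fintype.card F = 4) (hρ : ρ ^ 2 + ρ + 1 = 0)
include hF hρ

theorem mem_span_codeGen_iff {v : Fin 7 → F} :
    v ∈ Submodule.span F (Set.range (codeGen ρ)) ↔ ∃ t, v = F₄.toField ρ ∘ F₄.codeword t := by
  rw [Submodule.mem_span_range_iff_exists_fun,
    ((F₄.toField_bijective hF hρ).surjective.comp_left).exists]
  simp_rw [F₄.toField_comp_codeword hρ, comp_apply, eq_comm]

theorem span_codeGen_inf_dualCode_eq_bot :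
    Submodule.span F (Set.range (codeGen ρ)) ⊓ dualCode (Submodule.span F (Set.range (codeGen ρ)))
      = ⊥ := by
  refine eq_bot_iff.mpr fun v ⟨hvC, hvD⟩ => ?_
  obtain ⟨t, rfl⟩ := (mem_span_codeGen_iff hF hρ).mp hvC
  have horth : ∀ k, ∑ i, F₄.mul (F₄.codeword t i) (F₄.gen k i) = 0 := fun k =>
    F₄.toField_injective hρ <| by
      simpa [map_sum, F₄.toField_mul hρ, ← F₄.toField_comp_gen hρ k] using
        hvD _ (Submodule.subset_span (Set.mem_range_self k))
  simp [F₄.codeword_eq_zero_of_forall_orthogonal t horth]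

theorem linearIndependent_codeGen : LinearIndependent F (codeGen ρ) := by
  refine Fintype.linearIndependent_iff.mpr fun s hs => ?_
  obtain ⟨t, rfl⟩ := (F₄.toField_bijective hF hρ).surjective.comp_left s
  have hcodeword : F₄.codeword t = 0 :=
    (F₄.toField_injective hρ).comp_left (by simpa [F₄.toField_comp_codeword hρ] using hs)
  simp [F₄.eq_zero_of_codeword_eq_zero t hcodeword]

theorem isLeast_hammingNorm_span_codeGen [DecidableEq F] :
    IsLeast {w | ∃ c ∈ Submodule.span F (Set.range (codeGen ρ)), c ≠ 0 ∧ hammingNorm c = w} 4 := by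
  have hnorm (t : Fin 3 → F₄) : hammingNorm (F₄.toField ρ ∘ F₄.codeword t)
      = hammingNorm (F₄.codeword t) :=
    hammingNorm_comp (fun _ => F₄.toField ρ) (fun _ => F₄.toField_injective hρ) fun _ => map_zero _
  constructor
  · obtain ⟨t, ht⟩ := F₄.exists_hammingNorm_codeword_eq_four
    refine ⟨_, (mem_span_codeGen_iff hF hρ).mpr ⟨t, rfl⟩, ?_, by rw [hnorm, ht]⟩
    rw [← hammingNorm_ne_zero_iff, hnorm, ht]
    norm_num
  · rintro w ⟨c, hc, hc0, rfl⟩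
    obtain ⟨t, rfl⟩ := (mem_span_codeGen_iff hF hρ).mp hc
    rw [hnorm]
    exact F₄.four_le_hammingNorm_codeword t fun h => hc0 (by simp [h])

end Code

/-- over `F_4 = F_2[ρ]` with `ρ^2 + ρ + 1 = 0`, the code spanned by
`(1,1,1,1,1,1,1)`, `(0,ρ,ρ,ρ²,ρ²,1,1)` and `(0,ρ,1,1,ρ²,ρ²,ρ)` is an LCD code of
length 7, dimension 3 and minimum Hamming distance 4. -/
theorem stmt11 {F : Type*} [Field F] [Fintype F] [DecidableEq F]
    (hF : Fintype.card F = 4) (ρ : F) (hρ : ρ ^ 2 + ρ + 1 = 0)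
    (C : Submodule F (Fin 7 → F))
    (hC : C = Submodule.span F
      {![1, 1, 1, 1, 1, 1, 1],
       ![0, ρ, ρ, ρ ^ 2, ρ ^ 2, 1, 1],
       ![0, ρ, 1, 1, ρ ^ 2, ρ ^ 2, ρ]}) :
    C ⊓ dualCode C = ⊥ ∧
    Module.finrank F C = 3 ∧
    sInf {w : ℕ | ∃ c ∈ C, c ≠ 0 ∧ hammingNorm c = w} = 4 := by
  have : CharP F 2 := charP_two_of_card_eq_two_pow (k := 2) hF two_ne_zero
  subst hC
  rw [← range_codeGen]
  refine ⟨span_codeGen_inf_dualCode_eq_bot hF hρ, ?_, (isLeast_hammingNorm_span_codeGen hF hρ).csInf_eq⟩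
  rw [finrank_span_eq_card (linearIndependent_codeGen hF hρ), Fintype.card_fin]
end
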